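/- arXiv:2506.05773 — 5 statements merged into one kernel-verified Lean document; each statement's English description precedes it below -/
import Mathlib

section
/- Fix β > 0 and suppose α_k ≥ α*_k > 0 for all k = 1,...,n. Let A = ∑_k α_k and A* = ∑_k α*_k (so A ≥ A*). Then the ratio g(x)/f(x), where f(x) = (A + nβx)·exp(-(Ax + nβx²/2)) and g(x) = (A* + nβx)·exp(-(A*x + nβx²/2)), is monotone increasing in x > 0; i.e., X_{1:n} ≤_lr Y_{1:n}. -/
theorem lfr_series_lr_order (n : ℕ) (β : ℝ) (hβ : 0 < β) (α αs : Fin n → ℝ)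
    (hαpos : ∀ k, 0 < αs k) (hα : ∀ k, αs k ≤ α k)
    (A As : ℝ) (hA : A = ∑ k, α k) (hAs : As = ∑ k, αs k) :
    MonotoneOn
      (fun x : ℝ =>
        ((As + n * β * x) * Real.exp (-(As * x + n * β * x ^ 2 / 2))) /
          ((A + n * β * x) * Real.exp (-(A * x + n * β * x ^ 2 / 2))))
      (Set.Ioi (0 : ℝ)) := by
  rcases Nat.eq_zero_or_pos n with hn | hn
  · subst hn hA hAs
    simp only [Finset.univ_eq_empty, Finset.sum_empty, Nat.cast_zero, zero_mul, zero_add,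
      zero_div, zero_mul]
    exact monotoneOn_const
  -- main case n ≥ 1
  have hAsA : As ≤ A := by
    rw [hA, hAs]; exact Finset.sum_le_sum fun k _ => hα k
  have hAspos : 0 < As := by
    rw [hAs]
    exact Finset.sum_pos (fun k _ => hαpos k) ⟨⟨0,hn⟩, Finset.mem_univ _⟩
  have hApos : 0 < A := lt_of_lt_of_le hAspos hAsA
  set c : ℝ := n * β with hc
  have hcpos : 0 < c := by positivity
  intro x hx y hy hxy
  have hx0 : (0:ℝ) < x := hx
  have hy0 : (0:ℝ) < y := hy
  have hdx : 0 < A + c * x := by positivity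
  have hdy : 0 < A + c * y := by positivity
  have key : ∀ z : ℝ, 0 < z →
      ((As + c * z) * Real.exp (-(As * z + c * z ^ 2 / 2))) /
        ((A + c * z) * Real.exp (-(A * z + c * z ^ 2 / 2))) =
      ((As + c * z) / (A + c * z)) * Real.exp ((A - As) * z) := by
    intro z hz
    rw [← div_mul_div_comm, ← Real.exp_sub]
    congr 1
    ring_nf
  simp only
  rw [key x hx0, key y hy0]
  have h1 : (As + c * x) / (A + c * x) ≤ (As + c * y) / (A + c * y) := by
    rw [div_le_div_iff₀ hdx hdy]
    nlinarith [mul_le_mul_of_nonneg_left hxy (le_of_lt hcpos)]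
  have h2 : Real.exp ((A - As) * x) ≤ Real.exp ((A - As) * y) := by
    apply Real.exp_le_exp.mpr
    apply mul_le_mul_of_nonneg_left hxy (by linarith)
  have h3 : 0 ≤ (As + c * x) / (A + c * x) := by positivity
  exact mul_le_mul h1 h2 (Real.exp_pos _).le (le_trans h3 (by linarith [h1]))
end

section
/- Fix β > 0, n ≥ 1, and suppose α_k ≥ α*_k > 0 for all k. Let A = ∑_k α_k, A* = ∑_k α*_k, and define F^{-1}(p) = (-A + √(A² - 2nβ·log(1-p)))/(nβ) and G^{-1}(p) = (-A* + √((A*)² - 2nβ·log(1-p)))/(nβ). Then p ↦ G^{-1}(p) - F^{-1}(p) is monotone increasing on (0,1); i.e., X_{1:n} ≤_disp Y_{1:n}. -/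
lemma sqrt_diff_key {a b s t : ℝ} (ha : 0 < a) (hab : a ≤ b) (hs : 0 < s) (hst : s ≤ t) :
    Real.sqrt (b ^ 2 + t) - Real.sqrt (b ^ 2 + s) ≤
      Real.sqrt (a ^ 2 + t) - Real.sqrt (a ^ 2 + s) := by
  set u := Real.sqrt (a ^ 2 + s) with hu
  set v := Real.sqrt (a ^ 2 + t) with hv
  set w := Real.sqrt (b ^ 2 + s) with hw
  set x := Real.sqrt (b ^ 2 + t) with hx
  have hu2 : u ^ 2 = a ^ 2 + s := Real.sq_sqrt (by nlinarith [sq_nonneg a])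
  have hv2 : v ^ 2 = a ^ 2 + t := Real.sq_sqrt (by nlinarith [sq_nonneg a])
  have hw2 : w ^ 2 = b ^ 2 + s := Real.sq_sqrt (by nlinarith [sq_nonneg b])
  have hx2 : x ^ 2 = b ^ 2 + t := Real.sq_sqrt (by nlinarith [sq_nonneg b])
  have hupos : 0 < u := Real.sqrt_pos.2 (by positivity)
  have huv : u ≤ v := Real.sqrt_le_sqrt (by linarith)
  have huw : u ≤ w := Real.sqrt_le_sqrt (by nlinarith)
  have hvx : v ≤ x := Real.sqrt_le_sqrt (by nlinarith)
  have hwx : w ≤ x := Real.sqrt_le_sqrt (by linarith)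
  nlinarith [mul_le_mul_of_nonneg_left (add_le_add huv hvx) (sub_nonneg.2 hwx)]

theorem lfr_series_disp_order (n : ℕ) (hn : 1 ≤ n) (β : ℝ) (hβ : 0 < β)
    (α αs : Fin n → ℝ) (hαpos : ∀ k, 0 < αs k) (hα : ∀ k, αs k ≤ α k)
    (A As : ℝ) (hA : A = ∑ k, α k) (hAs : As = ∑ k, αs k) :
    MonotoneOn
      (fun p : ℝ =>
        (-As + Real.sqrt (As ^ 2 - 2 * n * β * Real.log (1 - p))) / (n * β) -
          (-A + Real.sqrt (A ^ 2 - 2 * n * β * Real.log (1 - p))) / (n * β))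
      (Set.Ioo (0 : ℝ) 1) := by
  have hAsA : As ≤ A := by
    rw [hA, hAs]; exact Finset.sum_le_sum fun k _ => hα k
  have hne : (Finset.univ : Finset (Fin n)).Nonempty := by
    have : Nonempty (Fin n) := ⟨⟨0, hn⟩⟩
    exact Finset.univ_nonempty
  have hAspos : 0 < As := by
    rw [hAs]; exact Finset.sum_pos (fun k _ => hαpos k) hne
  have hnβ : 0 < (n : ℝ) * β := by
    have : (1:ℝ) ≤ n := by exact_mod_cast hn
    positivity
  intro p hp q hq hpq
  simp only
  set s := -(2 * (n:ℝ) * β * Real.log (1 - p)) with hsdef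
  set t := -(2 * (n:ℝ) * β * Real.log (1 - q)) with htdef
  have hspos : 0 < s := by
    have h1 : Real.log (1 - p) < 0 :=
      Real.log_neg (by linarith [hp.1, hp.2]) (by linarith [hp.1])
    have h2 : 0 < 2 * (n:ℝ) * β := by nlinarith
    rw [hsdef]; nlinarith
  have hst : s ≤ t := by
    have h1 : Real.log (1 - q) ≤ Real.log (1 - p) :=
      Real.log_le_log (by linarith [hq.2]) (by linarith [hpq])
    have h2 : 0 < 2 * (n:ℝ) * β := by nlinarith
    rw [hsdef, htdef]; nlinarith
  have hrew : ∀ r c : ℝ, c ^ 2 - 2 * (n:ℝ) * β * Real.log (1 - r) =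
      c ^ 2 + -(2 * (n:ℝ) * β * Real.log (1 - r)) := by intro r c; ring
  rw [hrew p As, hrew p A, hrew q As, hrew q A, ← hsdef, ← htdef]
  have key := sqrt_diff_key hAspos hAsA hspos hst
  rw [div_sub_div_same, div_sub_div_same, div_le_div_iff₀ hnβ hnβ]
  nlinarith [key]
end

section
/- Fix β > 0 and suppose 0 < α_k < α*_k for all k. Let A = ∑_k α_k, A* = ∑_k α*_k. Then the function x ↦ (-A* + √((A*)² + 2nβxA + n²β²x²))/(nβx) is monotone increasing on (0,∞); i.e., X_{1:n} ≤_* Y_{1:n} (star order between series systems). -/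
theorem lfr_series_star_order (n : ℕ) (β : ℝ) (hβ : 0 < β)
    (α αs : Fin n → ℝ) (hαpos : ∀ k, 0 < α k) (hα : ∀ k, α k < αs k)
    (A As : ℝ) (hA : A = ∑ k, α k) (hAs : As = ∑ k, αs k) :
    MonotoneOn
      (fun x : ℝ =>
        (-As + Real.sqrt (As ^ 2 + 2 * n * β * x * A + n ^ 2 * β ^ 2 * x ^ 2)) / (n * β * x))
      (Set.Ioi (0 : ℝ)) := by
  rcases Nat.eq_zero_or_pos n with hn | hn
  · subst hn
    have hAs0 : As = 0 := by simp [hAs]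
    intro a _ b _ _
    simp [hAs0]
  · have hnR : (0:ℝ) < n := by exact_mod_cast hn
    have hc : (0:ℝ) < n * β := mul_pos hnR hβ
    have : Nonempty (Fin n) := ⟨⟨0, hn⟩⟩
    have hApos : 0 < A := by
      rw [hA]; exact Finset.sum_pos (fun k _ => hαpos k) Finset.univ_nonempty
    have hAAs : A < As := by
      rw [hA, hAs]
      exact Finset.sum_lt_sum_of_nonempty Finset.univ_nonempty (fun k _ => hα k)
    have hAs0 : 0 < As := lt_trans hApos hAAs
    intro x hx y hy hxy
    simp only [Set.mem_Ioi] at hx hy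
    set c : ℝ := (n : ℝ) * β with hcdef
    set sx := Real.sqrt (As ^ 2 + 2 * n * β * x * A + n ^ 2 * β ^ 2 * x ^ 2) with hsxdef
    set sy := Real.sqrt (As ^ 2 + 2 * n * β * y * A + n ^ 2 * β ^ 2 * y ^ 2) with hsydef
    have hEx : (0:ℝ) ≤ As ^ 2 + 2 * n * β * x * A + n ^ 2 * β ^ 2 * x ^ 2 := by positivity
    have hEy : (0:ℝ) ≤ As ^ 2 + 2 * n * β * y * A + n ^ 2 * β ^ 2 * y ^ 2 := by positivity
    have hsx2 : sx ^ 2 = As ^ 2 + 2 * c * A * x + c ^ 2 * x ^ 2 := by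
      rw [hsxdef, Real.sq_sqrt hEx]; ring
    have hsy2 : sy ^ 2 = As ^ 2 + 2 * c * A * y + c ^ 2 * y ^ 2 := by
      rw [hsydef, Real.sq_sqrt hEy]; ring
    have hsx0 : 0 ≤ sx := Real.sqrt_nonneg _
    have hsy0 : 0 ≤ sy := Real.sqrt_nonneg _
    have hK0 : 0 ≤ As ^ 2 + c * A * (x + y) + c ^ 2 * (x * y) := by positivity
    have hKsq : (As ^ 2 + c * A * (x + y) + c ^ 2 * (x * y)) ^ 2 ≤ (sx * sy) ^ 2 := by
      have h1 : (sx * sy) ^ 2 = sx ^ 2 * sy ^ 2 := by ring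
      rw [h1, hsx2, hsy2]
      nlinarith [mul_nonneg (mul_nonneg (sq_nonneg c) (sq_nonneg (x - y)))
        (sub_nonneg.2 (sq_le_sq' (by linarith) hAAs.le))]
    have hK : As ^ 2 + c * A * (x + y) + c ^ 2 * (x * y) ≤ sx * sy := by
      calc As ^ 2 + c * A * (x + y) + c ^ 2 * (x * y)
          = Real.sqrt ((As ^ 2 + c * A * (x + y) + c ^ 2 * (x * y)) ^ 2) :=
            (Real.sqrt_sq hK0).symm
        _ ≤ Real.sqrt ((sx * sy) ^ 2) := Real.sqrt_le_sqrt hKsq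
        _ = sx * sy := Real.sqrt_sq (mul_nonneg hsx0 hsy0)
    have hRnn : 0 ≤ As * (y - x) := mul_nonneg hAs0.le (by linarith)
    have hid : (As * (y - x)) ^ 2 - (y * sx - x * sy) ^ 2 =
        2 * (x * y) * (sx * sy - (As ^ 2 + c * A * (x + y) + c ^ 2 * (x * y))) := by
      linear_combination (-(y ^ 2)) * hsx2 - (x ^ 2) * hsy2
    have hsq : (y * sx - x * sy) ^ 2 ≤ (As * (y - x)) ^ 2 := by
      have h0 : 0 ≤ 2 * (x * y) *
          (sx * sy - (As ^ 2 + c * A * (x + y) + c ^ 2 * (x * y))) :=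
        mul_nonneg (by positivity) (sub_nonneg.2 hK)
      linarith [hid]
    have key : y * sx - x * sy ≤ As * (y - x) := by
      calc y * sx - x * sy ≤ |y * sx - x * sy| := le_abs_self _
        _ = Real.sqrt ((y * sx - x * sy) ^ 2) := (Real.sqrt_sq_eq_abs _).symm
        _ ≤ Real.sqrt ((As * (y - x)) ^ 2) := Real.sqrt_le_sqrt hsq
        _ = |As * (y - x)| := Real.sqrt_sq_eq_abs _
        _ = As * (y - x) := abs_of_nonneg hRnn
    show (-As + sx) / (c * x) ≤ (-As + sy) / (c * y)
    rw [div_le_div_iff₀ (by positivity) (by positivity)]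
    linarith [mul_le_mul_of_nonneg_left key hc.le]
end

section
/- Fix β > 0 and suppose 0 < α_k ≤ α*_k for all k. Let A = ∑_k α_k, A* = ∑_k α*_k. Then the function x ↦ (-A* + √((A*)² + 2nβ(Ax + nβx²/2)))/(nβ) is convex on (0,∞); i.e., X_{1:n} ≤_c Y_{1:n} (convex transform order between series systems). -/
lemma sqrt_sq_add_convex_key (D u v a b : ℝ) (hD : 0 ≤ D) (ha : 0 ≤ a) (hb : 0 ≤ b)
    (hab : a + b = 1) :
    Real.sqrt ((a * u + b * v) ^ 2 + D) ≤
      a * Real.sqrt (u ^ 2 + D) + b * Real.sqrt (v ^ 2 + D) := by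
  have hu : 0 ≤ u ^ 2 + D := by positivity
  have hv : 0 ≤ v ^ 2 + D := by positivity
  have su := Real.sq_sqrt hu
  have sv := Real.sq_sqrt hv
  have snu := Real.sqrt_nonneg (u ^ 2 + D)
  have snv := Real.sqrt_nonneg (v ^ 2 + D)
  have key : u * v + D ≤ Real.sqrt (u ^ 2 + D) * Real.sqrt (v ^ 2 + D) := by
    rw [← Real.sqrt_mul hu]
    rcases le_or_gt (u * v + D) 0 with h | h
    · exact h.trans (Real.sqrt_nonneg _)
    · rw [show Real.sqrt ((u ^ 2 + D) * (v ^ 2 + D)) =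
        Real.sqrt ((u ^ 2 + D) * (v ^ 2 + D)) from rfl]
      have : (u * v + D) ^ 2 ≤ (u ^ 2 + D) * (v ^ 2 + D) := by nlinarith [sq_nonneg (u - v)]
      calc u * v + D = Real.sqrt ((u * v + D) ^ 2) := by rw [Real.sqrt_sq h.le]
        _ ≤ Real.sqrt ((u ^ 2 + D) * (v ^ 2 + D)) := Real.sqrt_le_sqrt this
  have hRHS : 0 ≤ a * Real.sqrt (u ^ 2 + D) + b * Real.sqrt (v ^ 2 + D) := by positivity
  rw [show a * Real.sqrt (u ^ 2 + D) + b * Real.sqrt (v ^ 2 + D) =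
      Real.sqrt ((a * Real.sqrt (u ^ 2 + D) + b * Real.sqrt (v ^ 2 + D)) ^ 2) from
      (Real.sqrt_sq hRHS).symm]
  apply Real.sqrt_le_sqrt
  have hD1 : D * (a + b) ^ 2 = D := by rw [hab]; ring
  have expand : (a * Real.sqrt (u ^ 2 + D) + b * Real.sqrt (v ^ 2 + D)) ^ 2 =
      a ^ 2 * (u ^ 2 + D) + b ^ 2 * (v ^ 2 + D) +
        2 * a * b * (Real.sqrt (u ^ 2 + D) * Real.sqrt (v ^ 2 + D)) := by
    linear_combination a ^ 2 * su + b ^ 2 * sv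
  rw [expand]
  nlinarith [mul_nonneg (mul_nonneg ha hb) (sub_nonneg.mpr key), hD1]

theorem lfr_series_convex_order (n : ℕ) (β : ℝ) (hβ : 0 < β)
    (α αs : Fin n → ℝ) (hαpos : ∀ k, 0 < α k) (hα : ∀ k, α k ≤ αs k)
    (A As : ℝ) (hA : A = ∑ k, α k) (hAs : As = ∑ k, αs k) :
    ConvexOn ℝ (Set.Ioi (0 : ℝ))
      (fun x : ℝ =>
        (-As + Real.sqrt (As ^ 2 + 2 * n * β * (A * x + n * β * x ^ 2 / 2))) / (n * β)) := by
  rcases Nat.eq_zero_or_pos n with hn | hn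
  · subst hn
    simp only [hA, hAs, Finset.univ_eq_empty, Finset.sum_empty, Nat.cast_zero]
    have : (fun x : ℝ => (-(0:ℝ) + Real.sqrt (0 ^ 2 + 2 * 0 * β * (0 * x + 0 * β * x ^ 2 / 2))) / (0 * β)) = fun _ : ℝ => (0:ℝ) := by
      funext x; simp
    rw [this]
    exact convexOn_const 0 (convex_Ioi 0)
  · set c : ℝ := (n : ℝ) * β with hc
    have hcpos : 0 < c := by
      have : (0:ℝ) < (n : ℝ) := by exact_mod_cast hn
      positivity
    have hApos : 0 < A := by
      rw [hA]
      apply Finset.sum_pos (fun k _ => hαpos k)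
      exact Finset.univ_nonempty_iff.mpr (Fin.pos_iff_nonempty.mp hn)
    have hAAs : A ≤ As := by
      rw [hA, hAs]; exact Finset.sum_le_sum (fun k _ => hα k)
    set D : ℝ := As ^ 2 - A ^ 2 with hD
    have hDnn : 0 ≤ D := by nlinarith
    have hfun : (fun x : ℝ =>
        (-As + Real.sqrt (As ^ 2 + 2 * n * β * (A * x + n * β * x ^ 2 / 2))) / (n * β)) =
        fun x : ℝ => (-As + Real.sqrt ((c * x + A) ^ 2 + D)) / c := by
      funext x
      rw [show As ^ 2 + 2 * n * β * (A * x + n * β * x ^ 2 / 2) = (c * x + A) ^ 2 + D by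
        rw [hc, hD]; ring]
    rw [hfun]
    constructor
    · exact convex_Ioi 0
    · intro x _ y _ a b ha hb hab
      simp only [smul_eq_mul]
      have key := sqrt_sq_add_convex_key D (c * x + A) (c * y + A) a b hDnn ha hb hab
      have harg : a * (c * x + A) + b * (c * y + A) = c * (a * x + b * y) + A := by
        have : a * A + b * A = A := by rw [← add_mul, hab, one_mul]
        linarith [this]
      rw [harg] at key
      have heq : a * ((-As + Real.sqrt ((c * x + A) ^ 2 + D)) / c) +
          b * ((-As + Real.sqrt ((c * y + A) ^ 2 + D)) / c) =
          (a * (-As + Real.sqrt ((c * x + A) ^ 2 + D)) +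
            b * (-As + Real.sqrt ((c * y + A) ^ 2 + D))) / c := by ring
      rw [heq]
      have h2 : -As + Real.sqrt ((c * (a * x + b * y) + A) ^ 2 + D) ≤
          a * (-As + Real.sqrt ((c * x + A) ^ 2 + D)) +
            b * (-As + Real.sqrt ((c * y + A) ^ 2 + D)) := by nlinarith [key]
      exact div_le_div_of_nonneg_right h2 hcpos.le
end

section
/- If α ≥ α* > 0 and β > 0 are fixed, then the function x ↦ (α* + βx)/(α + βx) · exp((α - α*)x) is monotone increasing on (0,∞). -/
theorem lfr_single_lr_ratio (α αs β : ℝ) (hαs : 0 < αs) (hα : αs ≤ α) (hβ : 0 < β) :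
    MonotoneOn
      (fun x : ℝ => (αs + β * x) / (α + β * x) * Real.exp ((α - αs) * x))
      (Set.Ioi (0 : ℝ)) := by
  have hd : ∀ x ∈ Set.Ioi (0:ℝ), HasDerivAt
      (fun x : ℝ => (αs + β * x) / (α + β * x) * Real.exp ((α - αs) * x))
      ((β * (α + β * x) - (αs + β * x) * β) / (α + β * x) ^ 2 * Real.exp ((α - αs) * x)
        + (αs + β * x) / (α + β * x) * ((α - αs) * Real.exp ((α - αs) * x))) x := by
    intro x hx
    have hden : (0:ℝ) < α + β * x := by
      have : 0 < β * x := mul_pos hβ hx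
      linarith
    have hnum : HasDerivAt (fun x : ℝ => αs + β * x) β x := by
      simpa [Pi.add_def] using (hasDerivAt_const x αs).add ((hasDerivAt_id x).const_mul β)
    have hden' : HasDerivAt (fun x : ℝ => α + β * x) β x := by
      simpa [Pi.add_def] using (hasDerivAt_const x α).add ((hasDerivAt_id x).const_mul β)
    have hg := hnum.div hden' hden.ne'
    have hh : HasDerivAt (fun x : ℝ => Real.exp ((α - αs) * x))
        ((α - αs) * Real.exp ((α - αs) * x)) x := by
      have : HasDerivAt (fun x : ℝ => (α - αs) * x) (α - αs) x := by
        simpa using (hasDerivAt_id x).const_mul (α - αs)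
      simpa [mul_comm] using this.exp
    simpa [Pi.mul_def, Pi.div_def, mul_comm, mul_assoc] using hg.mul hh
  have hdiff : ∀ x ∈ Set.Ioi (0:ℝ), DifferentiableAt ℝ
      (fun x : ℝ => (αs + β * x) / (α + β * x) * Real.exp ((α - αs) * x)) x :=
    fun x hx => (hd x hx).differentiableAt
  apply monotoneOn_of_deriv_nonneg (convex_Ioi 0)
  · exact fun x hx => (hdiff x hx).continuousAt.continuousWithinAt
  · intro x hx
    rw [interior_Ioi] at hx
    exact (hdiff x hx).differentiableWithinAt
  · intro x hx
    rw [interior_Ioi] at hx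
    rw [(hd x hx).deriv]
    have hden : (0:ℝ) < α + β * x := by
      have : 0 < β * x := mul_pos hβ hx
      linarith
    have h1 : (0:ℝ) ≤ (β * (α + β * x) - (αs + β * x) * β) / (α + β * x) ^ 2 := by
      apply div_nonneg _ (sq_nonneg _)
      nlinarith
    have h2 : (0:ℝ) ≤ (αs + β * x) / (α + β * x) := by
      apply div_nonneg _ hden.le
      have := mul_pos hβ hx
      linarith
    exact add_nonneg (mul_nonneg h1 (Real.exp_nonneg _))
      (mul_nonneg h2 (mul_nonneg (by linarith) (Real.exp_nonneg _)))
end
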